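/- With g = a ⊕ h ⊕ I as in the decomposition of an indecomposable non-simple quadratic Lie super algebra of degree δ (I minimal abelian ideal, I^⊥ = h ⊕ I, h^⊥ = a ⊕ I, a isotropic), the restriction [·,·]_a of the bracket projected to a makes (a, [·,·]_a) a Lie super algebra, and the components λ : a × a → h, μ : a × a → I, ρ : a → End(h), τ : a → Hom(h, I), σ : a → gl(I) of the bracket satisfy: Σ_cyclic (-1)^{|x||z|}(λ(x,[y,z]_a) + ρ(x)(λ(y,z))) = 0 and Σ_cyclic (-1)^{|x||z|}(μ(x,[y,z]_a) + τ(x)(λ(y,z)) + σ(x)(μ(y,z))) = 0 for homogeneous x,y,z ∈ a. -/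

import Mathlib

/-- The sign `(-1)^{ij}` for `i j : ZMod 2`. -/
def sgn (F : Type*) [Field F] (i j : ZMod 2) : F := (-1) ^ (i * j).val

/-- The orthogonal `J^⊥ = {w : B(j, w) = 0 for all j ∈ J}` of a subspace with
respect to a bilinear form `B`. -/
def orth {F V : Type*} [Field F] [AddCommGroup V] [Module F V]
    (B : V →ₗ[F] V →ₗ[F] F) (J : Submodule F V) : Submodule F V where
  carrier := {w | ∀ j ∈ J, B j w = 0}
  add_mem' := by
    intro w w' hw hw' j hj
    simp [hw j hj, hw' j hj]
  zero_mem' := by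
    intro j hj
    simp
  smul_mem' := by
    intro c w hw j hj
    simp [hw j hj]

/-- in the decomposition `g = aa ⊕ hh ⊕ I` of an indecomposable
non-simple quadratic Lie super algebra of degree `δ`, the projected bracket
`[·,·]_a` makes `aa` a Lie super algebra, and the component maps satisfy
`Σ_cyclic (-1)^{|x||z|}(λ(x,[y,z]_a) + ρ(x)(λ(y,z))) = 0` and
`Σ_cyclic (-1)^{|x||z|}(μ(x,[y,z]_a) + τ(x)(λ(y,z)) + σ(x)(μ(y,z))) = 0`,
where `σ(x)(α) = [x, α]`. -/
theorem a_is_Lie_superalgebra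
    (F V : Type*) [Field F] [IsAlgClosed F] [CharZero F]
    [AddCommGroup V] [Module F V] [FiniteDimensional F V]
    (g : ZMod 2 → Submodule F V) (hg : DirectSum.IsInternal g)
    (br : V →ₗ[F] V →ₗ[F] V)
    -- `(g, [·,·])` is a Lie super algebra
    (hbr_even : ∀ i j : ZMod 2, ∀ x y : V, x ∈ g i → y ∈ g j → br x y ∈ g (i + j))
    (hbr_skew : ∀ i j : ZMod 2, ∀ x y : V, x ∈ g i → y ∈ g j →
      br x y = -(sgn F i j) • br y x)
    (hbr_jac : ∀ i j k : ZMod 2, ∀ x y z : V, x ∈ g i → y ∈ g j → z ∈ g k →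
      sgn F i k • br x (br y z) + sgn F j i • br y (br z x)
        + sgn F k j • br z (br x y) = 0)
    -- `B` is an invariant metric of degree `δ`
    (δ : ZMod 2) (B : V →ₗ[F] V →ₗ[F] F)
    (hB_symm : ∀ i j : ZMod 2, ∀ x y : V, x ∈ g i → y ∈ g j →
      B x y = sgn F i j * B y x)
    (hB_inv : ∀ x y z : V, B (br x y) z = B x (br y z))
    (hB_nd : ∀ x : V, (∀ y : V, B x y = 0) → x = 0)
    (hB_deg : ∀ i j : ZMod 2, ∀ x y : V, x ∈ g i → y ∈ g j → i + j ≠ δ → B x y = 0)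
    -- `g` is non-simple of dimension `> 1`
    (hdim : 1 < Module.finrank F V)
    (hns : ∃ J : Submodule F V, (∀ x : V, ∀ v ∈ J, br x v ∈ J) ∧
      J = (J ⊓ g 0) ⊔ (J ⊓ g 1) ∧ J ≠ ⊥ ∧ J ≠ ⊤)
    -- `g` is indecomposable
    (hind : ¬ ∃ J : Submodule F V, (∀ x : V, ∀ v ∈ J, br x v ∈ J) ∧
      J = (J ⊓ g 0) ⊔ (J ⊓ g 1) ∧ J ≠ ⊥ ∧ J ≠ ⊤ ∧ IsCompl J (orth B J))
    -- `I` is a minimal graded ideal, contained in `I^⊥` and abelian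
    (I : Submodule F V)
    (hI_ideal : ∀ x : V, ∀ v ∈ I, br x v ∈ I)
    (hI_graded : I = (I ⊓ g 0) ⊔ (I ⊓ g 1))
    (hI_ne : I ≠ ⊥)
    (hI_min : ∀ J : Submodule F V, (∀ x : V, ∀ v ∈ J, br x v ∈ J) →
      J = (J ⊓ g 0) ⊔ (J ⊓ g 1) → J ≤ I → J = ⊥ ∨ J = I)
    (hI_deg : I ≤ orth B I)
    -- graded complements: `I^⊥ = hh ⊕ I`, `hh^⊥ = aa ⊕ I`, `aa` isotropic,
    -- `g = aa ⊕ hh ⊕ I`, and `[I, I^⊥] = 0`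
    (hh aa : Submodule F V)
    (hhh_graded : hh = (hh ⊓ g 0) ⊔ (hh ⊓ g 1))
    (haa_graded : aa = (aa ⊓ g 0) ⊔ (aa ⊓ g 1))
    (hIperp : hh ⊔ I = orth B I)
    (hhhperp : aa ⊔ I = orth B hh)
    (haa_iso : ∀ x ∈ aa, ∀ y ∈ aa, B x y = 0)
    (hdisj1 : Disjoint hh I)
    (hdisj2 : Disjoint aa (hh ⊔ I))
    (hsum : aa ⊔ (hh ⊔ I) = ⊤)
    (hcentral : ∀ α ∈ I, ∀ w ∈ hh ⊔ I, br α w = 0)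
    -- components of the bracket with respect to `g = aa ⊕ hh ⊕ I`
    (bra lam mu rho tau brh gam : V →ₗ[F] V →ₗ[F] V)
    (hcomp_a : ∀ x ∈ aa, ∀ y ∈ aa, br x y = bra x y + lam x y + mu x y ∧
      bra x y ∈ aa ∧ lam x y ∈ hh ∧ mu x y ∈ I)
    (hcomp_ah : ∀ x ∈ aa, ∀ u ∈ hh, br x u = rho x u + tau x u ∧
      rho x u ∈ hh ∧ tau x u ∈ I)
    (hcomp_h : ∀ u ∈ hh, ∀ v ∈ hh, br u v = brh u v + gam u v ∧
      brh u v ∈ hh ∧ gam u v ∈ I)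
    (hcomp_aI : ∀ x ∈ aa, ∀ α ∈ I, br x α ∈ I)
    :
    -- `(aa, [·,·]_a)` is a Lie super algebra
    (∀ i j : ZMod 2, ∀ x y : V, x ∈ aa → x ∈ g i → y ∈ aa → y ∈ g j →
      bra x y ∈ g (i + j)) ∧
    (∀ i j : ZMod 2, ∀ x y : V, x ∈ aa → x ∈ g i → y ∈ aa → y ∈ g j →
      bra x y = -(sgn F i j) • bra y x) ∧
    (∀ i j k : ZMod 2, ∀ x y z : V, x ∈ aa → x ∈ g i → y ∈ aa → y ∈ g j →
      z ∈ aa → z ∈ g k →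
      sgn F i k • bra x (bra y z) + sgn F j i • bra y (bra z x)
        + sgn F k j • bra z (bra x y) = 0) ∧
    -- identity (2.17)
    (∀ i j k : ZMod 2, ∀ x y z : V, x ∈ aa → x ∈ g i → y ∈ aa → y ∈ g j →
      z ∈ aa → z ∈ g k →
      sgn F i k • (lam x (bra y z) + rho x (lam y z))
        + sgn F j i • (lam y (bra z x) + rho y (lam z x))
        + sgn F k j • (lam z (bra x y) + rho z (lam x y)) = 0) ∧
    -- identity (2.18)
    (∀ i j k : ZMod 2, ∀ x y z : V, x ∈ aa → x ∈ g i → y ∈ aa → y ∈ g j →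
      z ∈ aa → z ∈ g k →
      sgn F i k • (mu x (bra y z) + tau x (lam y z) + br x (mu y z))
        + sgn F j i • (mu y (bra z x) + tau y (lam z x) + br y (mu z x))
        + sgn F k j • (mu z (bra x y) + tau z (lam x y) + br z (mu x y)) = 0) := by
  classical
  -- directness of `aa ⊕ hh ⊕ I`
  have key : ∀ p q r : V, p ∈ aa → q ∈ hh → r ∈ I → p + q + r = 0 →
      p = 0 ∧ q = 0 ∧ r = 0 := by
    intro p q r hp hq hr h
    have hqr : q + r ∈ hh ⊔ I :=
      add_mem (Submodule.mem_sup_left hq) (Submodule.mem_sup_right hr)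
    have hp' : p ∈ hh ⊔ I := by
      have hpe : p = -(q + r) := by linear_combination (norm := module) h
      rw [hpe]; exact neg_mem hqr
    have hp0 : p = 0 := Submodule.disjoint_def.1 hdisj2 p hp hp'
    have hq' : q = -r := by rw [hp0] at h; linear_combination (norm := module) h
    have hq0 : q = 0 := Submodule.disjoint_def.1 hdisj1 q hq (hq' ▸ neg_mem hr)
    refine ⟨hp0, hq0, ?_⟩
    rw [hp0, hq0] at h; simpa using h
  have hdis01 : Disjoint (g 0) (g 1) :=
    hg.submodule_iSupIndep.pairwiseDisjoint (by decide)
  have split : ∀ W : Submodule F V, W = (W ⊓ g 0) ⊔ (W ⊓ g 1) → ∀ v ∈ W,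
      ∃ v0 v1 : V, v0 ∈ W ∧ v0 ∈ g 0 ∧ v1 ∈ W ∧ v1 ∈ g 1 ∧ v = v0 + v1 := by
    intro W hW v hv
    rw [hW] at hv
    obtain ⟨v0, h0, v1, h1, hsum⟩ := Submodule.mem_sup.1 hv
    exact ⟨v0, v1, h0.1, h0.2, h1.1, h1.2, hsum.symm⟩
  -- the `aa`-component of a `g k`-element lies in `g k`
  have proj : ∀ (k : ZMod 2) (w a h m : V), a ∈ aa → h ∈ hh → m ∈ I →
      w = a + h + m → w ∈ g k → a ∈ g k := by
    intro k w a h m ha hhm hm hw hwk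
    obtain ⟨a0, a1, ha0a, ha00, ha1a, ha11, haeq⟩ := split aa haa_graded a ha
    obtain ⟨h0, h1, hh0h, hh00, hh1h, hh11, hheq⟩ := split hh hhh_graded h hhm
    obtain ⟨m0, m1, hm0I, hm00, hm1I, hm11, hmeq⟩ := split I hI_graded m hm
    have hs : a0 + h0 + m0 ∈ g 0 := add_mem (add_mem ha00 hh00) hm00
    have ht : a1 + h1 + m1 ∈ g 1 := add_mem (add_mem ha11 hh11) hm11
    have hwst : w = (a0 + h0 + m0) + (a1 + h1 + m1) := by
      rw [hw, haeq, hheq, hmeq]; module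
    have hk : k = 0 ∨ k = 1 := by fin_cases k; exacts [Or.inl rfl, Or.inr rfl]
    rcases hk with rfl | rfl
    · have htg0 : a1 + h1 + m1 ∈ g 0 := by
        have he : a1 + h1 + m1 = w - (a0 + h0 + m0) := by
          rw [hwst]; module
        rw [he]; exact sub_mem hwk hs
      have ht0 : a1 + h1 + m1 = 0 := Submodule.disjoint_def.1 hdis01 _ htg0 ht
      obtain ⟨ha10, -, -⟩ := key a1 h1 m1 ha1a hh1h hm1I ht0
      rw [haeq, ha10, add_zero]; exact ha00
    · have hsg1 : a0 + h0 + m0 ∈ g 1 := by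
        have he : a0 + h0 + m0 = w - (a1 + h1 + m1) := by
          rw [hwst]; module
        rw [he]; exact sub_mem hwk ht
      have hs0 : a0 + h0 + m0 = 0 := Submodule.disjoint_def.1 hdis01.symm _ hsg1 hs
      obtain ⟨ha00', -, -⟩ := key a0 h0 m0 ha0a hh0h hm0I hs0
      rw [haeq, ha00', zero_add]; exact ha11
  -- expansion of the double bracket
  have expand : ∀ x ∈ aa, ∀ y ∈ aa, ∀ z ∈ aa,
      br x (br y z) = bra x (bra y z)
        + (lam x (bra y z) + rho x (lam y z))
        + (mu x (bra y z) + tau x (lam y z) + br x (mu y z)) := by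
    intro x hx y hy z hz
    obtain ⟨e1, hbraa, hlamh, hmuI⟩ := hcomp_a y hy z hz
    obtain ⟨e2, -, -, -⟩ := hcomp_a x hx (bra y z) hbraa
    obtain ⟨e3, -, -⟩ := hcomp_ah x hx (lam y z) hlamh
    rw [e1, map_add, map_add, e2, e3]
    module
  have memH : ∀ x ∈ aa, ∀ y ∈ aa, ∀ z ∈ aa,
      lam x (bra y z) + rho x (lam y z) ∈ hh := by
    intro x hx y hy z hz
    obtain ⟨-, hbraa, hlamh, -⟩ := hcomp_a y hy z hz
    exact add_mem (hcomp_a x hx (bra y z) hbraa).2.2.1 (hcomp_ah x hx (lam y z) hlamh).2.1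
  have memI : ∀ x ∈ aa, ∀ y ∈ aa, ∀ z ∈ aa,
      mu x (bra y z) + tau x (lam y z) + br x (mu y z) ∈ I := by
    intro x hx y hy z hz
    obtain ⟨-, hbraa, hlamh, hmuI⟩ := hcomp_a y hy z hz
    exact add_mem (add_mem (hcomp_a x hx (bra y z) hbraa).2.2.2
      (hcomp_ah x hx (lam y z) hlamh).2.2) (hcomp_aI x hx (mu y z) hmuI)
  have memA : ∀ x ∈ aa, ∀ y ∈ aa, ∀ z ∈ aa, bra x (bra y z) ∈ aa := by
    intro x hx y hy z hz
    exact (hcomp_a x hx (bra y z) (hcomp_a y hy z hz).2.1).2.1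
  -- the three Jacobi components
  have jac : ∀ i j k : ZMod 2, ∀ x y z : V, x ∈ aa → x ∈ g i → y ∈ aa → y ∈ g j →
      z ∈ aa → z ∈ g k →
      (sgn F i k • bra x (bra y z) + sgn F j i • bra y (bra z x)
        + sgn F k j • bra z (bra x y) = 0) ∧
      (sgn F i k • (lam x (bra y z) + rho x (lam y z))
        + sgn F j i • (lam y (bra z x) + rho y (lam z x))
        + sgn F k j • (lam z (bra x y) + rho z (lam x y)) = 0) ∧
      (sgn F i k • (mu x (bra y z) + tau x (lam y z) + br x (mu y z))
        + sgn F j i • (mu y (bra z x) + tau y (lam z x) + br y (mu z x))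
        + sgn F k j • (mu z (bra x y) + tau z (lam x y) + br z (mu x y)) = 0) := by
    intro i j k x y z hx hgx hy hgy hz hgz
    have J := hbr_jac i j k x y z hgx hgy hgz
    rw [expand x hx y hy z hz, expand y hy z hz x hx, expand z hz x hx y hy] at J
    have J' : (sgn F i k • bra x (bra y z) + sgn F j i • bra y (bra z x)
          + sgn F k j • bra z (bra x y))
        + (sgn F i k • (lam x (bra y z) + rho x (lam y z))
          + sgn F j i • (lam y (bra z x) + rho y (lam z x))
          + sgn F k j • (lam z (bra x y) + rho z (lam x y)))
        + (sgn F i k • (mu x (bra y z) + tau x (lam y z) + br x (mu y z))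
          + sgn F j i • (mu y (bra z x) + tau y (lam z x) + br y (mu z x))
          + sgn F k j • (mu z (bra x y) + tau z (lam x y) + br z (mu x y))) = 0 := by
      linear_combination (norm := module) J
    have hpA : sgn F i k • bra x (bra y z) + sgn F j i • bra y (bra z x)
        + sgn F k j • bra z (bra x y) ∈ aa :=
      add_mem (add_mem (Submodule.smul_mem _ _ (memA x hx y hy z hz))
        (Submodule.smul_mem _ _ (memA y hy z hz x hx)))
        (Submodule.smul_mem _ _ (memA z hz x hx y hy))
    have hpH : _ ∈ hh :=
      add_mem (add_mem (Submodule.smul_mem _ (sgn F i k) (memH x hx y hy z hz))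
        (Submodule.smul_mem _ (sgn F j i) (memH y hy z hz x hx)))
        (Submodule.smul_mem _ (sgn F k j) (memH z hz x hx y hy))
    have hpI : _ ∈ I :=
      add_mem (add_mem (Submodule.smul_mem _ (sgn F i k) (memI x hx y hy z hz))
        (Submodule.smul_mem _ (sgn F j i) (memI y hy z hz x hx)))
        (Submodule.smul_mem _ (sgn F k j) (memI z hz x hx y hy))
    exact key _ _ _ hpA hpH hpI J'
  refine ⟨?_, ?_, fun i j k x y z hx hgx hy hgy hz hgz =>
      (jac i j k x y z hx hgx hy hgy hz hgz).1,
    fun i j k x y z hx hgx hy hgy hz hgz =>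
      (jac i j k x y z hx hgx hy hgy hz hgz).2.1,
    fun i j k x y z hx hgx hy hgy hz hgz =>
      (jac i j k x y z hx hgx hy hgy hz hgz).2.2⟩
  · -- gradedness of `bra`
    intro i j x y hx hgx hy hgy
    obtain ⟨e, hba, hlh, hmI⟩ := hcomp_a x hx y hy
    exact proj (i + j) (br x y) (bra x y) (lam x y) (mu x y) hba hlh hmI e
      (hbr_even i j x y hgx hgy)
  · -- skew-symmetry of `bra`
    intro i j x y hx hgx hy hgy
    obtain ⟨exy, hbaxy, hlxy, hmxy⟩ := hcomp_a x hx y hy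
    obtain ⟨eyx, hbayx, hlyx, hmyx⟩ := hcomp_a y hy x hx
    have hS : br x y + sgn F i j • br y x = 0 := by
      rw [hbr_skew i j x y hgx hgy]; module
    rw [exy, eyx] at hS
    have hS' : (bra x y + sgn F i j • bra y x) + (lam x y + sgn F i j • lam y x)
        + (mu x y + sgn F i j • mu y x) = 0 := by
      linear_combination (norm := module) hS
    have h0 := (key _ _ _
      (add_mem hbaxy (Submodule.smul_mem _ _ hbayx))
      (add_mem hlxy (Submodule.smul_mem _ _ hlyx))
      (add_mem hmxy (Submodule.smul_mem _ _ hmyx)) hS').1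
    linear_combination (norm := module) h0
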